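/- Let G : U → ℝ^k be measurable with g⋆ := sup_{u∈U} |G(u)|_Σ < ∞, and for δ ∈ ℝ^k define Φ(u;δ) = (1/2)|δ − G(u)|_Σ². Let ρ^δ be the probability measure on (U,Θ) with density exp(−Φ(u;δ))/Z(δ) with respect to ρ, where Z(δ) = ∫_U exp(−Φ(u;δ)) dρ(u). Then for every r > 0 there exists C(r) > 0 such that for all δ, δ' ∈ ℝ^k with |δ|_Σ ≤ r and |δ'|_Σ ≤ r, d_Hell(ρ^δ, ρ^{δ'}) ≤ C(r) |δ − δ'|_Σ. -/

import Mathlib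

open MeasureTheory Matrix

/-- The Hellinger distance between two probability measures which are
absolutely continuous with respect to `ρ`, expressed through their densities
`f` and `h` with respect to `ρ`. -/
noncomputable def dHell {U : Type*} [MeasurableSpace U] (ρ : Measure U)
    (f h : U → ℝ) : ℝ :=
  Real.sqrt ((1 / 2) * ∫ u, (Real.sqrt (f u) - Real.sqrt (h u)) ^ 2 ∂ρ)

/-- The covariance-weighted norm `|v|_Σ = |Σ^{-1/2} v| = √(vᵀ Σ⁻¹ v)` on `ℝ^k`
associated with a symmetric positive definite matrix `Σ`. -/
noncomputable def normSigma {k : ℕ} (S : Matrix (Fin k) (Fin k) ℝ)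
    (v : Fin k → ℝ) : ℝ :=
  Real.sqrt (v ⬝ᵥ (S⁻¹ *ᵥ v))

/-- The Bayesian potential `Φ(u;δ) = ½ |δ - G(u)|_Σ²` for a forward map `G`. -/
noncomputable def PhiPot {U : Type*} {k : ℕ} (S : Matrix (Fin k) (Fin k) ℝ)
    (G : U → Fin k → ℝ) (u : U) (δ : Fin k → ℝ) : ℝ :=
  (1 / 2) * (normSigma S (δ - G u)) ^ 2

/-! For `|δ|_Σ ≤ r` the potential `Φ(·;δ)` takes values in `[0, M]` with `M = L²/2`,
`L = r + |g⋆|`, and, as a difference of squares, `|Φ(u;δ) - Φ(u;δ')| ≤ L |δ - δ'|_Σ` uniformly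
in `u`. Since `t ↦ exp (-t)` is `1`-Lipschitz on `[0, ∞)` and `Z ≥ exp (-M)`, the square roots
`exp (-Φ/2) / √Z` of the two densities differ pointwise by at most `exp (3M/2) L |δ - δ'|_Σ`,
and this pointwise bound controls the Hellinger distance. -/

open Real

lemma abs_exp_neg_sub_exp_neg_le {a b : ℝ} (ha : 0 ≤ a) (hb : 0 ≤ b) :
    |exp (-a) - exp (-b)| ≤ |a - b| := by
  wlog hba : b ≤ a generalizing a b
  · rw [abs_sub_comm, abs_sub_comm a b]
    exact this hb ha (le_of_not_ge hba)
  rw [abs_of_nonpos (sub_nonpos.2 (exp_le_exp.2 (neg_le_neg hba))),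
    abs_of_nonneg (sub_nonneg.2 hba)]
  have h1 : 1 - (a - b) ≤ exp (-(a - b)) := by linarith [add_one_le_exp (-(a - b))]
  have h2 : exp (-b) * exp (-(a - b)) = exp (-a) := by rw [← exp_add]; ring_nf
  nlinarith [exp_pos (-b), exp_le_one_iff.2 (neg_nonpos.2 hb)]

lemma abs_sqrt_sub_sqrt_le {x y s : ℝ} (hs : 0 < s) (hx : s ≤ √x) (hy : s ≤ √y) :
    |√x - √y| ≤ |x - y| / (2 * s) := by
  have hx0 : 0 ≤ x := sqrt_pos.1 (hs.trans_le hx) |>.le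
  have hy0 : 0 ≤ y := sqrt_pos.1 (hs.trans_le hy) |>.le
  have hprod : (√x - √y) * (√x + √y) = x - y := by
    rw [mul_comm, ← sq_sub_sq, sq_sqrt hx0, sq_sqrt hy0]
  rw [le_div_iff₀ (by positivity), ← hprod, abs_mul, abs_of_pos (by linarith : 0 < √x + √y)]
  gcongr
  linarith

lemma abs_div_sub_div_le {a b p q s : ℝ} (hs : 0 < s) (hp : s ≤ p) (hq : s ≤ q) (hb : |b| ≤ 1) :
    |a / p - b / q| ≤ |a - b| / s + |p - q| / s ^ 2 := by
  have hp0 : 0 < p := hs.trans_le hp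
  have hq0 : 0 < q := hs.trans_le hq
  have hsplit : a / p - b / q = (a - b) / p + b * ((q - p) / (p * q)) := by
    field_simp
    ring
  rw [hsplit]
  calc |(a - b) / p + b * ((q - p) / (p * q))|
      ≤ |(a - b) / p| + |b * ((q - p) / (p * q))| := abs_add_le _ _
    _ = |a - b| / p + |b| * (|p - q| / (p * q)) := by
        rw [abs_div, abs_mul, abs_div, abs_of_pos hp0, abs_of_pos (mul_pos hp0 hq0),
          abs_sub_comm q p]
    _ ≤ |a - b| / s + 1 * (|p - q| / s ^ 2) := by
        gcongr
        rw [sq]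
        gcongr
    _ = |a - b| / s + |p - q| / s ^ 2 := by rw [one_mul]

noncomputable def gibbsDensity {U : Type*} [MeasurableSpace U] (ρ : Measure U) (φ : U → ℝ)
    (u : U) : ℝ :=
  exp (-φ u) / ∫ v, exp (-φ v) ∂ρ

section Gibbs

variable {U : Type*} [MeasurableSpace U] {ρ : Measure U} {φ ψ : U → ℝ} {M ε : ℝ}

lemma integrable_exp_neg [IsFiniteMeasure ρ] (hφ : Measurable φ) (hφ0 : ∀ u, 0 ≤ φ u) :
    Integrable (fun u => exp (-φ u)) ρ := by
  refine Integrable.mono' (integrable_const 1) (by fun_prop) (ae_of_all _ fun u => ?_)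
  rw [norm_of_nonneg (exp_pos _).le]
  exact exp_le_one_iff.2 (neg_nonpos.2 (hφ0 u))

lemma exp_neg_le_integral_exp_neg [IsProbabilityMeasure ρ] (hφ : Measurable φ)
    (hφ0 : ∀ u, 0 ≤ φ u) (hφM : ∀ u, φ u ≤ M) :
    exp (-M) ≤ ∫ u, exp (-φ u) ∂ρ := by
  simpa using integral_mono (integrable_const (exp (-M))) (integrable_exp_neg (ρ := ρ) hφ hφ0)
    fun u => exp_le_exp.2 (neg_le_neg (hφM u))

lemma abs_integral_exp_neg_sub_le [IsProbabilityMeasure ρ] (hφ : Measurable φ)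
    (hψ : Measurable ψ) (hφ0 : ∀ u, 0 ≤ φ u) (hψ0 : ∀ u, 0 ≤ ψ u)
    (hε : ∀ u, |φ u - ψ u| ≤ ε) :
    |∫ u, exp (-φ u) ∂ρ - ∫ u, exp (-ψ u) ∂ρ| ≤ ε := by
  have hφi := integrable_exp_neg (ρ := ρ) hφ hφ0
  have hψi := integrable_exp_neg (ρ := ρ) hψ hψ0
  rw [← integral_sub hφi hψi]
  calc |∫ u, (exp (-φ u) - exp (-ψ u)) ∂ρ|
      ≤ ∫ u, |exp (-φ u) - exp (-ψ u)| ∂ρ := abs_integral_le_integral_abs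
    _ ≤ ∫ _, ε ∂ρ := integral_mono (hφi.sub hψi).abs (integrable_const ε)
        fun u => (abs_exp_neg_sub_exp_neg_le (hφ0 u) (hψ0 u)).trans (hε u)
    _ = ε := by simp

lemma dHell_le_of_abs_sqrt_sub_le [IsProbabilityMeasure ρ] {f h : U → ℝ} {K : ℝ} (hK : 0 ≤ K)
    (hfh : ∀ u, |√(f u) - √(h u)| ≤ K) : dHell ρ f h ≤ K := by
  have hint : ∫ u, (√(f u) - √(h u)) ^ 2 ∂ρ ≤ K ^ 2 := by
    simpa using integral_mono_of_nonneg (ae_of_all _ fun u => sq_nonneg _)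
      (integrable_const (μ := ρ) (K ^ 2)) (ae_of_all _ fun u => sq_le_sq' (abs_le.1 (hfh u)).1
        (abs_le.1 (hfh u)).2)
  have hnn : 0 ≤ ∫ u, (√(f u) - √(h u)) ^ 2 ∂ρ := integral_nonneg fun u => sq_nonneg _
  calc dHell ρ f h ≤ √(K ^ 2) := sqrt_le_sqrt (by linarith)
    _ = K := sqrt_sq hK

lemma abs_sqrt_gibbsDensity_sub_le [IsProbabilityMeasure ρ] (hφ : Measurable φ)
    (hψ : Measurable ψ) (hφ0 : ∀ u, 0 ≤ φ u) (hψ0 : ∀ u, 0 ≤ ψ u) (hφM : ∀ u, φ u ≤ M)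
    (hψM : ∀ u, ψ u ≤ M) (hε : ∀ u, |φ u - ψ u| ≤ ε) (u : U) :
    |√(gibbsDensity ρ φ u) - √(gibbsDensity ρ ψ u)| ≤ exp (3 * M / 2) * ε := by
  have hε0 : 0 ≤ ε := (abs_nonneg _).trans (hε u)
  set s := exp (-(M / 2))
  have hs : 0 < s := exp_pos _
  have hs1 : s ≤ 1 := exp_le_one_iff.2 (by linarith [hφ0 u, hφM u])
  have hs_sq : s ^ 2 = exp (-M) := by rw [← exp_nat_mul]; ring_nf
  have hZφ : s ≤ √(∫ u, exp (-φ u) ∂ρ) :=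
    le_sqrt_of_sq_le (hs_sq ▸ exp_neg_le_integral_exp_neg hφ hφ0 hφM)
  have hZψ : s ≤ √(∫ u, exp (-ψ u) ∂ρ) :=
    le_sqrt_of_sq_le (hs_sq ▸ exp_neg_le_integral_exp_neg hψ hψ0 hψM)
  have hZ := (abs_sqrt_sub_sqrt_le hs hZφ hZψ).trans
    (div_le_div_of_nonneg_right (abs_integral_exp_neg_sub_le hφ hψ hφ0 hψ0 hε) (by positivity))
  have hnum : |exp (-(φ u / 2)) - exp (-(ψ u / 2))| ≤ ε / 2 := by
    refine (abs_exp_neg_sub_exp_neg_le (by linarith [hφ0 u]) (by linarith [hψ0 u])).trans ?_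
    rw [← sub_div, abs_div, abs_two]
    linarith [hε u]
  have hψ1 : |exp (-(ψ u / 2))| ≤ 1 := by
    rw [abs_of_pos (exp_pos _)]
    exact exp_le_one_iff.2 (by linarith [hψ0 u])
  simp only [gibbsDensity, sqrt_div (exp_pos _).le, ← exp_half, neg_div]
  calc _ ≤ (ε / 2) / s + (ε / (2 * s)) / s ^ 2 :=
        (abs_div_sub_div_le hs hZφ hZψ hψ1).trans (by gcongr)
    _ = ε * ((s ^ 2 + 1) / 2) / s ^ 3 := by field_simp
    _ ≤ ε * 1 / s ^ 3 := by gcongr; nlinarith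
    _ = exp (3 * M / 2) * ε := by
        rw [mul_one, div_eq_mul_inv, mul_comm, ← exp_nat_mul, ← Real.exp_neg]
        ring_nf

theorem dHell_gibbsDensity_le [IsProbabilityMeasure ρ] (hφ : Measurable φ) (hψ : Measurable ψ)
    (hφ0 : ∀ u, 0 ≤ φ u) (hψ0 : ∀ u, 0 ≤ ψ u) (hφM : ∀ u, φ u ≤ M) (hψM : ∀ u, ψ u ≤ M)
    (hε : ∀ u, |φ u - ψ u| ≤ ε) :
    dHell ρ (gibbsDensity ρ φ) (gibbsDensity ρ ψ) ≤ exp (3 * M / 2) * ε := by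
  obtain ⟨u₀⟩ := nonempty_of_isProbabilityMeasure ρ
  have hM : 0 ≤ M := (hφ0 u₀).trans (hφM u₀)
  have hε0 : 0 ≤ ε := (abs_nonneg _).trans (hε u₀)
  exact dHell_le_of_abs_sqrt_sub_le (by positivity)
    (abs_sqrt_gibbsDensity_sub_le hφ hψ hφ0 hψ0 hφM hψM hε)

end Gibbs

section normSigma

lemma normSigma_nonneg {k : ℕ} (S : Matrix (Fin k) (Fin k) ℝ) (v : Fin k → ℝ) :
    0 ≤ normSigma S v :=
  sqrt_nonneg _

variable {k : ℕ} {S : Matrix (Fin k) (Fin k) ℝ}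

-- `normSigma S` is the norm of the inner product `⟪x, y⟫ = xᵀ S⁻¹ y`, not of the sup norm
-- that `Fin k → ℝ` carries by default.
lemma normSigma_eq_norm (hS : S⁻¹.PosSemidef) (v : Fin k → ℝ) :
    normSigma S v = @Norm.norm _ (S⁻¹.toSeminormedAddCommGroup hS).toNorm v := by
  rw [normSigma, dotProduct_comm]
  rfl

lemma normSigma_sub_le (hS : S⁻¹.PosSemidef) (a b : Fin k → ℝ) :
    normSigma S (a - b) ≤ normSigma S a + normSigma S b := by
  simp only [normSigma_eq_norm hS]
  exact @norm_sub_le _ (S⁻¹.toSeminormedAddCommGroup hS).toSeminormedAddGroup a b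

lemma abs_normSigma_sub_normSigma_le (hS : S⁻¹.PosSemidef) (a b : Fin k → ℝ) :
    |normSigma S a - normSigma S b| ≤ normSigma S (a - b) := by
  simp only [normSigma_eq_norm hS]
  exact @abs_norm_sub_norm_le _ (S⁻¹.toSeminormedAddCommGroup hS) a b

variable {U : Type*} {G : U → Fin k → ℝ} {u : U} {δ δ' : Fin k → ℝ} {L : ℝ}

lemma PhiPot_nonneg : 0 ≤ PhiPot S G u δ := by
  unfold PhiPot
  positivity

lemma PhiPot_le (hL : normSigma S (δ - G u) ≤ L) : PhiPot S G u δ ≤ L ^ 2 / 2 := by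
  unfold PhiPot
  nlinarith [sq_le_sq' (by linarith [normSigma_nonneg S (δ - G u)]) hL]

lemma abs_PhiPot_sub_le (hS : S⁻¹.PosSemidef) (hL : normSigma S (δ - G u) ≤ L)
    (hL' : normSigma S (δ' - G u) ≤ L) :
    |PhiPot S G u δ - PhiPot S G u δ'| ≤ L * normSigma S (δ - δ') := by
  have hdiff := abs_normSigma_sub_normSigma_le hS (δ - G u) (δ' - G u)
  rw [sub_sub_sub_cancel_right] at hdiff
  have hsum : normSigma S (δ - G u) + normSigma S (δ' - G u) ≤ 2 * L := by linarith
  unfold PhiPot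
  rw [← mul_sub, sq_sub_sq, abs_mul, abs_mul, abs_of_pos one_half_pos,
    abs_of_nonneg (add_nonneg (normSigma_nonneg _ _) (normSigma_nonneg _ _)), mul_comm]
  have hL0 : 0 ≤ 2 * L := (add_nonneg (normSigma_nonneg _ _) (normSigma_nonneg _ _)).trans hsum
  linarith [mul_le_mul hsum hdiff (abs_nonneg _) hL0]

end normSigma

lemma measurable_PhiPot {U : Type*} [MeasurableSpace U] {k : ℕ} (S : Matrix (Fin k) (Fin k) ℝ)
    {G : U → Fin k → ℝ} (hG : Measurable G) (δ : Fin k → ℝ) :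
    Measurable fun u => PhiPot S G u δ := by
  simp only [PhiPot, normSigma, dotProduct, mulVec]
  fun_prop

/-- local Lipschitz continuity, in the Hellinger metric, of the
posterior `dρ^δ/dρ = exp(-Φ(·;δ))/Z(δ)` with respect to the data `δ`, for the
potential `Φ(u;δ) = ½|δ - G(u)|_Σ²` of a uniformly bounded forward map `G`. -/
theorem stmt8
    {U : Type*} [MeasurableSpace U]
    (ρ : Measure U) [IsProbabilityMeasure ρ]
    (k : ℕ) (S : Matrix (Fin k) (Fin k) ℝ) (hS : S.PosDef)
    (G : U → Fin k → ℝ) (hGmeas : Measurable G)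
    (gstar : ℝ) (hg : ∀ u, normSigma S (G u) ≤ gstar) :
    ∀ r > (0 : ℝ), ∃ C > (0 : ℝ), ∀ δ δ' : Fin k → ℝ,
      normSigma S δ ≤ r → normSigma S δ' ≤ r →
      dHell ρ
        (fun u => Real.exp (-PhiPot S G u δ) /
          ∫ v, Real.exp (-PhiPot S G v δ) ∂ρ)
        (fun u => Real.exp (-PhiPot S G u δ') /
          ∫ v, Real.exp (-PhiPot S G v δ') ∂ρ)
        ≤ C * normSigma S (δ - δ') := by
  intro r hr
  have hS' := hS.inv.posSemidef
  set L := r + |gstar|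
  have hL : ∀ δ, normSigma S δ ≤ r → ∀ u, normSigma S (δ - G u) ≤ L := fun δ hδ u =>
    (normSigma_sub_le hS' δ (G u)).trans (add_le_add hδ ((hg u).trans (le_abs_self gstar)))
  refine ⟨exp (3 * (L ^ 2 / 2) / 2) * L, by positivity, fun δ δ' hδ hδ' => ?_⟩
  rw [mul_assoc]
  exact dHell_gibbsDensity_le (measurable_PhiPot S hGmeas δ) (measurable_PhiPot S hGmeas δ')
    (fun _ => PhiPot_nonneg) (fun _ => PhiPot_nonneg) (fun u => PhiPot_le (hL δ hδ u))
    (fun u => PhiPot_le (hL δ' hδ' u)) (fun u => abs_PhiPot_sub_le hS' (hL δ hδ u) (hL δ' hδ' u))
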